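/- arXiv:1303.2385 — 3 statements merged into one kernel-verified Lean document; each statement's English description precedes it below -/
import Mathlib

section
/- Let U ⊆ ℂⁿ be open, and let a₀,…,a_m : U → ℂ be holomorphic functions. Let 𝓕 = {(z,w) ∈ U × ℂ : Σ_{l=0}^m a_l(z) w^l = 0}. Suppose M ⊂ U is a real-analytic hypersurface, C > 0 a constant such that every local holomorphic branch F of 𝓕 satisfies |F(z)| ≤ C for z ∈ M in its domain, and suppose z₀ ∈ M is a point with a_m(z₀) = 0 but a_j(z₀) ≠ 0 for some j < m, and there is a sequence z_k ∈ M with a_m(z_k) ≠ 0, z_k → z₀, near which 𝓕 has m branches counted with multiplicity. Then one obtains a contradiction; i.e., no such point z₀ exists. (Key step: the elementary symmetric functions of the m bounded roots are bounded, so a_j(z_k)/a_m(z_k) is bounded, contradicting a_j(z₀)/a_m(z₀) = ∞.) -/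
/-!
At each `z_k` the fiber polynomial has degree exactly `m`, and each of its roots is the value
of a branch of `𝓕`, hence has modulus at most `C`. Writing the coefficients as elementary
symmetric functions of the roots (Vieta) gives `‖a_j(z_k)‖ ≤ C^(m-j) (m choose j) ‖a_m(z_k)‖`.
Letting `k → ∞` yields `‖a_j(z₀)‖ ≤ 0`, contradicting `a_j(z₀) ≠ 0`.
-/

open Filter Polynomial

theorem Polynomial.norm_coeff_le_of_roots_le {K : Type*} [NormedField K] {p : K[X]}
    (hp : p.Splits) {B : ℝ} (hB : ∀ z ∈ p.roots, ‖z‖ ≤ B) (i : ℕ) :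
    ‖p.coeff i‖ ≤ B ^ (p.natDegree - i) * p.natDegree.choose i * ‖p.leadingCoeff‖ := by
  rcases eq_or_ne p 0 with rfl | hp0
  · simp
  have hlc : p.leadingCoeff ≠ 0 := leadingCoeff_ne_zero.mpr hp0
  have hmonic : (C p.leadingCoeff⁻¹ * p).Monic := by
    rw [mul_comm]; exact monic_mul_leadingCoeff_inv hp0
  have key := coeff_le_of_roots_le (f := RingHom.id K) i hmonic
    (by simpa using (Splits.C _).mul hp)
    (by simpa [roots_C_mul _ (inv_ne_zero hlc)] using hB)
  rw [map_id, coeff_C_mul, natDegree_C_mul (inv_ne_zero hlc), norm_mul, norm_inv] at key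
  rwa [inv_mul_le_iff₀ (norm_pos_iff.mpr hlc), mul_comm] at key

theorem norm_le_mul_norm_of_roots_le {K : Type*} [NormedField K] [IsAlgClosed K] {m j : ℕ}
    (hj : j ≤ m) {c : ℕ → K} (hc : c m ≠ 0) {B : ℝ}
    (hB : ∀ w, ∑ l ∈ Finset.range (m + 1), c l * w ^ l = 0 → ‖w‖ ≤ B) :
    ‖c j‖ ≤ B ^ (m - j) * m.choose j * ‖c m‖ := by
  set p : K[X] := ∑ l ∈ Finset.range (m + 1), monomial l (c l)
  have hcoeff : ∀ i ≤ m, p.coeff i = c i := fun i hi => by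
    simp [p, coeff_monomial, Nat.lt_succ_iff.mpr hi]
  have hdeg : p.natDegree = m := by
    refine le_antisymm (natDegree_sum_le_of_forall_le _ _ fun l hl => ?_) ?_
    · exact (natDegree_monomial_le _).trans (Nat.lt_succ_iff.mp (Finset.mem_range.mp hl))
    · exact le_natDegree_of_ne_zero (by rwa [hcoeff m le_rfl])
  have hroots : ∀ w ∈ p.roots, ‖w‖ ≤ B := fun w hw => hB w <| by
    simpa [p, eval_finsetSum] using (mem_roots'.mp hw).2
  have := p.norm_coeff_le_of_roots_le (IsAlgClosed.splits p) hroots j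
  rwa [hdeg, leadingCoeff, hdeg, hcoeff j hj, hcoeff m le_rfl] at this

theorem no_vanishing_leading_coeff_general {n m : ℕ}
    (U : Set (Fin n → ℂ)) (hU : IsOpen U)
    (a : ℕ → (Fin n → ℂ) → ℂ) (ha : ∀ l ≤ m, DifferentiableOn ℂ (a l) U)
    (M : Set (Fin n → ℂ)) (hMU : M ⊆ U) (C : ℝ)
    -- every local holomorphic branch `F` of `𝓕` satisfies `‖F‖ ≤ C` on `M`:
    (hbound : ∀ Ω : Set (Fin n → ℂ), IsOpen Ω → Ω ⊆ U →
      ∀ F : (Fin n → ℂ) → ℂ, DifferentiableOn ℂ F Ω →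
        (∀ z ∈ Ω, ∑ l ∈ Finset.range (m + 1), a l z * F z ^ l = 0) →
        ∀ z ∈ M ∩ Ω, ‖F z‖ ≤ C)
    (z₀ : Fin n → ℂ) (hz₀M : z₀ ∈ M) (hz₀m : a m z₀ = 0)
    (j : ℕ) (hjm : j < m) (hz₀j : a j z₀ ≠ 0)
    (z : ℕ → Fin n → ℂ) (hzM : ∀ k, z k ∈ M) (hzm : ∀ k, a m (z k) ≠ 0)
    (hzlim : Tendsto z atTop (nhds z₀))
    -- near each `z_k`, `𝓕` has `m` branches counted with multiplicity: every root of the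
    -- fiber polynomial at `z_k` is the value of a local holomorphic branch of `𝓕`:
    (hbranch : ∀ k, ∀ w : ℂ, (∑ l ∈ Finset.range (m + 1), a l (z k) * w ^ l) = 0 →
      ∃ Ω : Set (Fin n → ℂ), IsOpen Ω ∧ Ω ⊆ U ∧ z k ∈ Ω ∧
        ∃ F : (Fin n → ℂ) → ℂ, DifferentiableOn ℂ F Ω ∧ F (z k) = w ∧
          ∀ ζ ∈ Ω, ∑ l ∈ Finset.range (m + 1), a l ζ * F ζ ^ l = 0) :
    False := by
  set B := C ^ (m - j) * m.choose j
  have hratio : ∀ k, ‖a j (z k)‖ ≤ B * ‖a m (z k)‖ := fun k =>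
    norm_le_mul_norm_of_roots_le hjm.le (hzm k) fun w hw => by
      obtain ⟨Ω, hΩ, hΩU, hzkΩ, F, hF, rfl, hFroot⟩ := hbranch k w hw
      exact hbound Ω hΩ hΩU F hF hFroot (z k) ⟨hzM k, hzkΩ⟩
  have htendsto : ∀ l ≤ m, Tendsto (fun k => ‖a l (z k)‖) atTop (nhds ‖a l z₀‖) := fun l hl =>
    (((ha l hl).continuousOn.continuousAt (hU.mem_nhds (hMU hz₀M))).tendsto.comp hzlim).norm
  have hlimit : ‖a j z₀‖ ≤ B * ‖a m z₀‖ :=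
    le_of_tendsto_of_tendsto' (htendsto j hjm.le) ((htendsto m le_rfl).const_mul B) hratio
  simp [hz₀m, hz₀j] at hlimit

/-- Let `U ⊆ ℂⁿ` be open and `a₀, …, a_m` holomorphic on `U`. Consider the
analytic set `𝓕 = {(z,w) : ∑_{l=0}^m a_l(z) w^l = 0}`, all of whose local holomorphic
branches are bounded by `C` on the real-analytic hypersurface `M ⊂ U`. If `z₀ ∈ M`
satisfies `a_m(z₀) = 0` but `a_j(z₀) ≠ 0` for some `j < m`, and there is a sequence
`z_k ∈ M` with `a_m(z_k) ≠ 0`, `z_k → z₀`, near which every root of the fiber polynomial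
extends to a local branch of `𝓕` (i.e. `𝓕` has `m` branches counted with multiplicity),
then one obtains a contradiction: no such point `z₀` exists. -/
theorem no_vanishing_leading_coeff {n m : ℕ}
    (U : Set (Fin n → ℂ)) (hU : IsOpen U)
    (a : ℕ → (Fin n → ℂ) → ℂ) (ha : ∀ l ≤ m, DifferentiableOn ℂ (a l) U)
    (M : Set (Fin n → ℂ)) (hMU : M ⊆ U) (C : ℝ) (hC : 0 < C)
    -- every local holomorphic branch `F` of `𝓕` satisfies `‖F‖ ≤ C` on `M`:
    (hbound : ∀ Ω : Set (Fin n → ℂ), IsOpen Ω → Ω ⊆ U →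
      ∀ F : (Fin n → ℂ) → ℂ, DifferentiableOn ℂ F Ω →
        (∀ z ∈ Ω, ∑ l ∈ Finset.range (m + 1), a l z * F z ^ l = 0) →
        ∀ z ∈ M ∩ Ω, ‖F z‖ ≤ C)
    (z₀ : Fin n → ℂ) (hz₀M : z₀ ∈ M) (hz₀m : a m z₀ = 0)
    (j : ℕ) (hjm : j < m) (hz₀j : a j z₀ ≠ 0)
    (z : ℕ → Fin n → ℂ) (hzM : ∀ k, z k ∈ M) (hzm : ∀ k, a m (z k) ≠ 0)
    (hzlim : Tendsto z atTop (nhds z₀))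
    -- near each `z_k`, `𝓕` has `m` branches counted with multiplicity: every root of the
    -- fiber polynomial at `z_k` is the value of a local holomorphic branch of `𝓕`:
    (hbranch : ∀ k, ∀ w : ℂ, (∑ l ∈ Finset.range (m + 1), a l (z k) * w ^ l) = 0 →
      ∃ Ω : Set (Fin n → ℂ), IsOpen Ω ∧ Ω ⊆ U ∧ z k ∈ Ω ∧
        ∃ F : (Fin n → ℂ) → ℂ, DifferentiableOn ℂ F Ω ∧ F (z k) = w ∧
          ∀ ζ ∈ Ω, ∑ l ∈ Finset.range (m + 1), a l ζ * F ζ ^ l = 0) :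
    False :=
  no_vanishing_leading_coeff_general U hU a ha M hMU C hbound z₀ hz₀M hz₀m j hjm hz₀j z hzM hzm
    hzlim hbranch
end

section
/- Fix n ≥ 4 and 2 ≤ ℓ ≤ n/2, and let N(η, η̄) be the Δ_ℓ-traceless part of Q(η, η̄) = −a(|η₁|⁴ − |η_n|⁴) with a > 0, as in the ℓ-harmonic decomposition. Then there exist vectors X₁, X₂ in the Levi null cone 𝒞_ℓ = {η ∈ ℂⁿ : −Σ_{j≤ℓ}|η_j|² + Σ_{j>ℓ}|η_j|² = 0} with N(X₁, X̄₁) < 0 and N(X₂, X̄₂) > 0. In particular, one can take X₁ = e₁ + e_{ℓ+1} and X₂ = e₂ + e_n (standard basis vectors), where N agrees with Q on 𝒞_ℓ, Q(X₁) = −a < 0 and Q(X₂) = a > 0. -/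
lemma eq_of_eq_add_mul_of_eq_zero {V : Type*} {Q N w : V → ℝ} {B : V → ℂ}
    (hdec : ∀ η, (Q η : ℂ) = (N η : ℂ) + B η * (w η : ℂ)) {η : V} (hη : w η = 0) :
    N η = Q η := by
  have h := hdec η
  rw [hη, Complex.ofReal_zero, mul_zero, add_zero] at h
  exact_mod_cast h.symm

section SingleAddSingle

variable {ι 𝕜 : Type*} [DecidableEq ι] [NormedRing 𝕜] [NormOneClass 𝕜]

lemma norm_single_add_single_apply {p q : ι} (hpq : p ≠ q) (j : ι) :
    ‖(Pi.single p 1 + Pi.single q 1 : ι → 𝕜) j‖ = if j = p ∨ j = q then 1 else 0 := by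
  by_cases hp : j = p
  · subst hp; simp [hpq]
  · by_cases hq : j = q
    · subst hq; simp [hp]
    · simp [hp, hq]

lemma sum_mul_norm_sq_single_add_single [Fintype ι] (w : ι → ℝ) {p q : ι} (hpq : p ≠ q) :
    ∑ j, w j * ‖(Pi.single p 1 + Pi.single q 1 : ι → 𝕜) j‖ ^ 2 = w p + w q := by
  rw [Fintype.sum_eq_add p q hpq]
  · simp only [norm_single_add_single_apply hpq]
    simp
  · rintro j ⟨hjp, hjq⟩
    simp [hjp, hjq]

lemma sum_signature_mul_norm_sq_single_add_single {n ℓ : ℕ} {ε : Fin n → ℝ}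
    (hε : ∀ j, ε j = if (j : ℕ) < ℓ then -1 else 1) {p q : Fin n}
    (hp : (p : ℕ) < ℓ) (hq : ℓ ≤ (q : ℕ)) :
    ∑ j, ε j * ‖(Pi.single p 1 + Pi.single q 1 : Fin n → 𝕜) j‖ ^ 2 = 0 := by
  have hpq : p ≠ q := fun h => by subst h; omega
  rw [sum_mul_norm_sq_single_add_single ε hpq, hε, hε, if_pos hp, if_neg (by omega)]
  ring

end SingleAddSingle

/-- Fix `n ≥ 4`, `2 ≤ ℓ ≤ n/2`, `a > 0`, and let `N` be the
`Δ_ℓ`-traceless part of `Q(η, η̄) = −a(|η₁|⁴ − |η_n|⁴)` in the `ℓ`-harmonic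
decomposition `Q = N + A·|η|²_ℓ` (with `A` of bidegree `(1,1)`); in particular `N = Q`
on the Levi null cone `𝒞_ℓ = {η : ∑_j ε_j |η_j|² = 0}`. Then there are vectors
`X₁, X₂ ∈ 𝒞_ℓ` with `N(X₁, X̄₁) < 0` and `N(X₂, X̄₂) > 0` (one can take
`X₁ = e₁ + e_{ℓ+1}`, `X₂ = e₂ + e_n`): the Chern–Moser–Weyl tensor is not pseudo
semi-definite. -/
theorem traceless_part_takes_both_signs_on_null_cone
    (n ℓ : ℕ) (hl : 2 ≤ ℓ) (hln : 2 * ℓ ≤ n)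
    (a : ℝ) (ha : 0 < a)
    (ε : Fin n → ℝ) (hε : ∀ j, ε j = if (j : ℕ) < ℓ then -1 else 1)
    (normℓ : (Fin n → ℂ) → ℝ) (hnormℓ : ∀ η, normℓ η = ∑ j, ε j * ‖η j‖ ^ 2)
    (Q : (Fin n → ℂ) → ℝ)
    (hQ : ∀ η, Q η = -a * (‖η ⟨0, by omega⟩‖ ^ 4 - ‖η ⟨n - 1, by omega⟩‖ ^ 4))
    (N : (Fin n → ℂ) → ℝ) (A : Fin n → Fin n → ℂ)
    -- `N` is the traceless part in the `ℓ`-harmonic decomposition `Q = N + A·|η|²_ℓ`: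
    (hdec : ∀ η : Fin n → ℂ, (Q η : ℂ) =
      (N η : ℂ) + (∑ α, ∑ β, A α β * η α * star (η β)) * (normℓ η : ℂ)) :
    ∃ X₁ X₂ : Fin n → ℂ,
      normℓ X₁ = 0 ∧ normℓ X₂ = 0 ∧ N X₁ < 0 ∧ 0 < N X₂ := by
  let X₁ : Fin n → ℂ := Pi.single ⟨0, by omega⟩ 1 + Pi.single ⟨ℓ, by omega⟩ 1
  let X₂ : Fin n → ℂ := Pi.single ⟨1, by omega⟩ 1 + Pi.single ⟨n - 1, by omega⟩ 1
  have hX₁ : normℓ X₁ = 0 := by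
    rw [hnormℓ]
    exact sum_signature_mul_norm_sq_single_add_single hε (by simp; omega) le_rfl
  have hX₂ : normℓ X₂ = 0 := by
    rw [hnormℓ]
    exact sum_signature_mul_norm_sq_single_add_single hε (by simp; omega) (by simp; omega)
  have hQX₁ : Q X₁ = -a := by
    rw [hQ, norm_single_add_single_apply (by simp; omega), if_pos (Or.inl rfl),
      norm_single_add_single_apply (by simp; omega), if_neg (by simp [Fin.ext_iff]; omega)]
    ring
  have hQX₂ : Q X₂ = a := by
    rw [hQ, norm_single_add_single_apply (by simp; omega), if_neg (by simp [Fin.ext_iff]; omega),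
      norm_single_add_single_apply (by simp; omega), if_pos (Or.inr rfl)]
    ring
  refine ⟨X₁, X₂, hX₁, hX₂, ?_, ?_⟩
  · rw [eq_of_eq_add_mul_of_eq_zero hdec hX₁, hQX₁]
    linarith
  · rw [eq_of_eq_add_mul_of_eq_zero hdec hX₂, hQX₂]
    exact ha
end

section
/- Let M = {(z,w) ∈ ℂ² : ρ = 0}, where ρ = −Im w + z^k z̄^k + c·Re(z^l z̄^{2k−l}) with integers 0 < l < k and real c with 2 < |c| < k²/(l(2k−l)). Then M is a smooth real hypersurface (dρ ≠ 0 everywhere), the Levi form of M is positive at every point of M \ L₀ where L₀ = {Im w = 0, z = 0}, and the Levi form is zero along L₀. In particular, the domain {ρ < 0} is pseudoconvex. -/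
/-!
The perturbation term of `∂²φ/∂z∂z̄` is `Re` of a monomial of total degree `2k - 2` in `z, z̄`,
so it is bounded by `|c| l (2k - l) |z|^{2k-2}`, and the Levi form is at least
`(k² - |c| l (2k - l)) |z|^{2k-2}`. On `M`, `z = 0` forces `Im w = 0`, i.e. a point of `L₀`.
Nondegeneracy of `dρ` is seen in the `Im w` direction, where `∂ρ = -1`.
-/

open ComplexConjugate

lemma Complex.abs_re_pow_mul_conj_pow_le {m n j : ℕ} (h : m + n = 2 * j) (z : ℂ) :
    |(z ^ m * conj z ^ n).re| ≤ Complex.normSq z ^ j :=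
  calc |(z ^ m * conj z ^ n).re|
      ≤ ‖z ^ m * conj z ^ n‖ := Complex.abs_re_le_norm _
    _ = (‖z‖ ^ 2) ^ j := by simp only [norm_mul, norm_pow, Complex.norm_conj, ← pow_add, h,
      pow_mul]
    _ = Complex.normSq z ^ j := by rw [Complex.sq_norm]

lemma sub_abs_mul_le_add_mul_of_abs_le {a b c x y : ℝ} (hb : 0 ≤ b) (hy : |y| ≤ x) :
    (a - |c| * b) * x ≤ a * x + c * b * y := by
  have : |c * b * y| ≤ |c| * b * x := by
    rw [abs_mul, abs_mul, abs_of_nonneg hb]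
    gcongr
  linarith [(abs_le.1 this).1]

lemma Complex.differentiable_re_pow_mul_conj_pow (m n : ℕ) :
    Differentiable ℝ fun z : ℂ => (z ^ m * conj z ^ n).re :=
  Complex.reCLM.differentiable.comp
    ((differentiable_id.pow m).mul (Complex.conjCLE.differentiable.pow n))

lemma fderiv_neg_im_snd_add_comp_fst_ne_zero {g : ℂ → ℝ} {p : ℂ × ℂ}
    (hg : DifferentiableAt ℝ g p.1) :
    fderiv ℝ (fun q : ℂ × ℂ => -q.2.im + g q.1) p ≠ 0 := by
  set L : ℂ × ℂ →L[ℝ] ℝ := -(Complex.imCLM.comp (ContinuousLinearMap.snd ℝ ℂ ℂ))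
  have hder : HasFDerivAt (fun q : ℂ × ℂ => -q.2.im + g q.1)
      (L + (fderiv ℝ g p.1).comp (ContinuousLinearMap.fst ℝ ℂ ℂ)) p :=
    L.hasFDerivAt.add (hg.hasFDerivAt.comp p hasFDerivAt_fst)
  rw [hder.fderiv]
  intro h
  simpa [L] using congrArg (fun T : ℂ × ℂ →L[ℝ] ℝ => T (0, Complex.I)) h

theorem kohn_nirenberg_hypersurface_general (l k : ℕ) (hl : 0 < l) (hlk : l < k)
    (c : ℝ) (hc2 : |c| * (l * (2 * k - l)) < (k : ℝ) ^ 2)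
    (ρ : ℂ × ℂ → ℝ)
    (hρ : ∀ p, ρ p = -p.2.im + (p.1 ^ k * (starRingEnd ℂ p.1) ^ k).re +
      c * (p.1 ^ l * (starRingEnd ℂ p.1) ^ (2 * k - l)).re)
    (M : Set (ℂ × ℂ)) (hM : M = {p | ρ p = 0})
    (L₀ : Set (ℂ × ℂ)) (hL₀ : L₀ = {p | p.2.im = 0 ∧ p.1 = 0})
    (levi : ℂ → ℝ)
    (hlevi : ∀ z, levi z = (k : ℝ) ^ 2 * Complex.normSq z ^ (k - 1) +
      c * (l * (2 * k - l)) * (z ^ (l - 1) * (starRingEnd ℂ z) ^ (2 * k - l - 1)).re) :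
    -- `M` is a smooth hypersurface: `dρ ≠ 0` everywhere:
    (∀ p : ℂ × ℂ, fderiv ℝ ρ p ≠ 0) ∧
    -- the Levi form is positive on `M \ L₀`:
    (∀ p ∈ M, p ∉ L₀ → 0 < levi p.1) ∧
    -- the Levi form vanishes along `L₀`:
    (∀ p ∈ L₀, levi p.1 = 0) ∧
    -- in particular the Levi form is `≥ 0` on `M`: the domain `{ρ < 0}` is pseudoconvex:
    (∀ p ∈ M, 0 ≤ levi p.1) := by
  have hA : (0 : ℝ) ≤ l * (2 * k - l) := by
    have : (l : ℝ) < k := by exact_mod_cast hlk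
    exact mul_nonneg l.cast_nonneg (by linarith)
  have hgap : 0 < (k : ℝ) ^ 2 - |c| * (l * (2 * k - l)) := by linarith
  have levi_ge (z : ℂ) :
      ((k : ℝ) ^ 2 - |c| * (l * (2 * k - l))) * Complex.normSq z ^ (k - 1) ≤ levi z :=
    hlevi z ▸ sub_abs_mul_le_add_mul_of_abs_le hA
      (Complex.abs_re_pow_mul_conj_pow_le (by omega) z)
  refine ⟨fun p => ?_, fun p hpM hpL => ?_, fun p hpL => ?_, fun p _ =>
    (mul_nonneg hgap.le (pow_nonneg (Complex.normSq_nonneg _) _)).trans (levi_ge p.1)⟩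
  · rw [show ρ = fun q => -q.2.im + ((q.1 ^ k * conj q.1 ^ k).re +
        c * (q.1 ^ l * conj q.1 ^ (2 * k - l)).re) from funext fun q => by rw [hρ, add_assoc]]
    exact fderiv_neg_im_snd_add_comp_fst_ne_zero
      (((Complex.differentiable_re_pow_mul_conj_pow _ _).add
        ((Complex.differentiable_re_pow_mul_conj_pow _ _).const_mul c)) p.1)
  · have hz : p.1 ≠ 0 := by
      rintro h0
      refine hpL (hL₀ ▸ ⟨?_, h0⟩)
      have hρp : ρ p = 0 := by rwa [hM] at hpM
      simpa [hρp, h0, zero_pow hl.ne', zero_pow (hl.trans hlk).ne'] using hρ p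
    exact (mul_pos hgap (pow_pos (Complex.normSq_pos.2 hz) _)).trans_le (levi_ge p.1)
  · obtain ⟨-, hz⟩ := hL₀ ▸ hpL
    simp [hlevi, hz, zero_pow (show k - 1 ≠ 0 by omega),
      zero_pow (show 2 * k - l - 1 ≠ 0 by omega)]

/-- the Kohn–Nirenberg hypersurface. Let
`ρ(z,w) = −Im w + z^k z̄^k + c·Re(z^l z̄^{2k−l})` with `0 < l < k` and
`2 < |c| < k²/(l(2k−l))`, and `M = {ρ = 0}`, `L₀ = {Im w = 0, z = 0}`. Then `M` is a
smooth real hypersurface (`dρ ≠ 0` everywhere), its Levi form — which for a graph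
`{−Im w + φ(z,z̄) = 0} ⊂ ℂ²` is, up to a positive factor,
`∂²φ/∂z∂z̄ = k²|z|^{2k−2} + c·l(2k−l)·Re(z^{l−1} z̄^{2k−l−1})` — is positive at every
point of `M \ L₀` and vanishes along `L₀`; in particular it is `≥ 0` on `M`, so the
domain `{ρ < 0}` is pseudoconvex. -/
theorem kohn_nirenberg_hypersurface (l k : ℕ) (hl : 0 < l) (hlk : l < k)
    (c : ℝ) (hc1 : 2 < |c|) (hc2 : |c| * (l * (2 * k - l)) < (k : ℝ) ^ 2)
    (ρ : ℂ × ℂ → ℝ)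
    (hρ : ∀ p, ρ p = -p.2.im + (p.1 ^ k * (starRingEnd ℂ p.1) ^ k).re +
      c * (p.1 ^ l * (starRingEnd ℂ p.1) ^ (2 * k - l)).re)
    (M : Set (ℂ × ℂ)) (hM : M = {p | ρ p = 0})
    (L₀ : Set (ℂ × ℂ)) (hL₀ : L₀ = {p | p.2.im = 0 ∧ p.1 = 0})
    (levi : ℂ → ℝ)
    (hlevi : ∀ z, levi z = (k : ℝ) ^ 2 * Complex.normSq z ^ (k - 1) +
      c * (l * (2 * k - l)) * (z ^ (l - 1) * (starRingEnd ℂ z) ^ (2 * k - l - 1)).re) :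
    -- `M` is a smooth hypersurface: `dρ ≠ 0` everywhere:
    (∀ p : ℂ × ℂ, fderiv ℝ ρ p ≠ 0) ∧
    -- the Levi form is positive on `M \ L₀`:
    (∀ p ∈ M, p ∉ L₀ → 0 < levi p.1) ∧
    -- the Levi form vanishes along `L₀`:
    (∀ p ∈ L₀, levi p.1 = 0) ∧
    -- in particular the Levi form is `≥ 0` on `M`: the domain `{ρ < 0}` is pseudoconvex:
    (∀ p ∈ M, 0 ≤ levi p.1) :=
  kohn_nirenberg_hypersurface_general l k hl hlk c hc2 ρ hρ M hM L₀ hL₀ levi hlevi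
end
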